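/- Let f : ℝ^d → ℝ be twice continuously differentiable with L1-Lipschitz gradient and L2-Lipschitz Hessian, let α ∈ (0,1], ε₁ ∈ (0,1), ε₂ = ε₁^α, and let x₀ satisfy f(x₀) − inf f ≤ Δ < ∞. Suppose x₁ = x₀ and (v_j) are unit vectors such that for every j: (i) λ_min(∇²f(x_j)) ≥ v_jᵀ∇²f(x_j)v_j − max(ε₂, ‖∇f(x_j)‖^α)/2 and v_jᵀ∇²f(x_j)v_j ≤ 0; (ii) x_{j+1} = x_j − (2·|v_jᵀ∇²f(x_j)v_j|/L2)·sign(v_jᵀ∇f(x_j))·v_j if 2·|v_jᵀ∇²f(x_j)v_j|³/(3·L2²) > ‖∇f(x_j)‖²/(2·L1), and x_{j+1} = x_j − (1/L1)·∇f(x_j) otherwise. Then the first index j* such that v_{j*}ᵀ∇²f(x_{j*})v_{j*} > −ε₂/2 and ‖∇f(x_{j*})‖ ≤ ε₁ satisfies j* ≤ 1 + max(12·L2²/ε₁^{3α}, 2·L1/ε₁²)·Δ, and at termination ‖∇f(x_{j*})‖ ≤ ε₁ and λ_min(∇²f(x_{j*})) ≥ −ε₁^α. -/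

import Mathlib

/-!
A curvature step of length `2|q|/L2` along a unit vector `v` with `q = ⟪∇²f(x) v, v⟫ ≤ 0`,
signed against the gradient, lowers `f` by at least `2|q|³/(3L2²)` (cubic upper model from the
Lipschitz Hessian); a gradient step `-∇f(x)/L1` lowers it by at least `‖∇f(x)‖²/(2L1)` (quadratic
upper model from the Lipschitz gradient). The rule (ii) takes the step with the larger of these two
guarantees, and before stopping either `|q| ≥ ε₁^α/2` or `‖∇f(x)‖ > ε₁`, so every step lowers `f` by
at least `1/max(12L2²/ε₁^{3α}, 2L1/ε₁²)`. As `f` can drop by at most `Δ`, this bounds the stopping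
index. At the stopping point `‖∇f‖^α ≤ ε₁^α`, so (i) gives `λ_min ≥ q - ε₁^α/2 > -ε₁^α`.
-/

open scoped RealInnerProductSpace

noncomputable def sgn (t : ℝ) : ℝ := if 0 ≤ t then 1 else -1

open Set

lemma sgn_mul_self (t : ℝ) : sgn t * t = |t| := by
  unfold sgn
  split_ifs with h
  · rw [one_mul, abs_of_nonneg h]
  · rw [abs_of_neg (not_le.mp h), neg_one_mul]

lemma sgn_mul_sgn (t : ℝ) : sgn t * sgn t = 1 := by
  unfold sgn; split_ifs <;> norm_num

lemma abs_sgn (t : ℝ) : |sgn t| = 1 := by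
  unfold sgn; split_ifs <;> norm_num

lemma hasDerivAt_cubic (c₀ c₁ c₂ c₃ t : ℝ) :
    HasDerivAt (fun s ↦ c₀ + c₁ * s + c₂ * s ^ 2 + c₃ * s ^ 3)
      (c₁ + 2 * c₂ * t + 3 * c₃ * t ^ 2) t := by
  have := ((((hasDerivAt_id t).const_mul c₁).const_add c₀).add
    ((hasDerivAt_pow 2 t).const_mul c₂)).add ((hasDerivAt_pow 3 t).const_mul c₃)
  exact this.congr_deriv (by norm_num; ring)

lemma le_of_hasDerivAt_le {φ ψ φ' ψ' : ℝ → ℝ} {b : ℝ}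
    (hφ : ∀ t, HasDerivAt φ (φ' t) t) (hψ : ∀ t, HasDerivAt ψ (ψ' t) t)
    (h₀ : φ 0 ≤ ψ 0) (hle : ∀ t ∈ Ico 0 b, φ' t ≤ ψ' t) :
    ∀ t ∈ Icc 0 b, φ t ≤ ψ t :=
  image_le_of_deriv_right_le_deriv_boundary
    (fun t _ ↦ (hφ t).continuousAt.continuousWithinAt) (fun t _ ↦ (hφ t).hasDerivWithinAt)
    h₀ (fun t _ ↦ (hψ t).continuousAt.continuousWithinAt) (fun t _ ↦ (hψ t).hasDerivWithinAt) hle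

lemma hasDerivAt_comp_add_smul {E F : Type*} [NormedAddCommGroup E] [NormedSpace ℝ E]
    [NormedAddCommGroup F] [NormedSpace ℝ F]
    {g : E → F} {a w : E} {t : ℝ} (hg : DifferentiableAt ℝ g (a + t • w)) :
    HasDerivAt (fun s : ℝ ↦ g (a + s • w)) (fderiv ℝ g (a + t • w) w) t := by
  have hline : HasDerivAt (fun s : ℝ ↦ a + s • w) w t := by
    simpa using ((hasDerivAt_id t).smul_const w).const_add a
  exact hg.hasFDerivAt.comp_hasDerivAt t hline

section InnerProductSpace

variable {E : Type*} [NormedAddCommGroup E] [InnerProductSpace ℝ E] [CompleteSpace E]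

noncomputable def ncgStep (f : E → ℝ) (L1 L2 : ℝ) (a v : E) : E :=
  if 2 * |⟪fderiv ℝ (gradient f) a v, v⟫| ^ 3 / (3 * L2 ^ 2) > ‖gradient f a‖ ^ 2 / (2 * L1) then
    a - ((2 * |⟪fderiv ℝ (gradient f) a v, v⟫| / L2) * sgn ⟪gradient f a, v⟫) • v
  else
    a - (1 / L1) • gradient f a

variable {f : E → ℝ}

theorem ContDiff.differentiable_gradient (hf : ContDiff ℝ 2 f) :
    Differentiable ℝ (gradient f) :=
  let T : StrongDual ℝ E →L[ℝ] E :=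
    (InnerProductSpace.toDual ℝ E).symm.toLinearEquiv.toAddMonoidHom.toRealLinearMap
      (InnerProductSpace.toDual ℝ E).symm.continuous
  T.differentiable.comp ((hf.fderiv_right (m := 1) le_rfl).differentiable one_ne_zero)

lemma hasDerivAt_apply_add_smul (hf : Differentiable ℝ f) (a w : E) (t : ℝ) :
    HasDerivAt (fun s : ℝ ↦ f (a + s • w)) ⟪gradient f (a + t • w), w⟫ t := by
  simpa only [inner_gradient_left] using hasDerivAt_comp_add_smul (hf (a + t • w))

lemma hasDerivAt_inner_gradient_add_smul (hf : ContDiff ℝ 2 f) (a w : E) (t : ℝ) :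
    HasDerivAt (fun s : ℝ ↦ ⟪gradient f (a + s • w), w⟫)
      ⟪fderiv ℝ (gradient f) (a + t • w) w, w⟫ t := by
  simpa using (hasDerivAt_comp_add_smul (hf.differentiable_gradient (a + t • w))).inner ℝ
    (hasDerivAt_const t w)

theorem apply_add_le_of_lipschitz_gradient {L : ℝ} (hf : Differentiable ℝ f)
    (hL : ∀ a b, ‖gradient f a - gradient f b‖ ≤ L * ‖a - b‖) (a w : E) :
    f (a + w) ≤ f a + ⟪gradient f a, w⟫ + L / 2 * ‖w‖ ^ 2 := by
  have hslope : ∀ t ∈ Ico (0 : ℝ) 1,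
      ⟪gradient f (a + t • w), w⟫ ≤ ⟪gradient f a, w⟫ + 2 * (L / 2 * ‖w‖ ^ 2) * t := by
    intro t ht
    have hgap : ⟪gradient f (a + t • w) - gradient f a, w⟫ ≤ L * ‖w‖ ^ 2 * t :=
      calc _ ≤ ‖gradient f (a + t • w) - gradient f a‖ * ‖w‖ := real_inner_le_norm _ _
        _ ≤ L * ‖t • w‖ * ‖w‖ := by
          gcongr; simpa using hL (a + t • w) a
        _ = L * ‖w‖ ^ 2 * t := by rw [norm_smul, Real.norm_of_nonneg ht.1]; ring
    rw [inner_sub_left] at hgap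
    linarith
  have key := le_of_hasDerivAt_le (hasDerivAt_apply_add_smul hf a w)
    (fun t ↦ by simpa using hasDerivAt_cubic (f a) ⟪gradient f a, w⟫ (L / 2 * ‖w‖ ^ 2) 0 t)
    (by simp) hslope 1 ⟨zero_le_one, le_rfl⟩
  simpa using key

theorem apply_add_le_of_lipschitz_hessian {L : ℝ} (hf : ContDiff ℝ 2 f)
    (hL : ∀ a b, ‖fderiv ℝ (gradient f) a - fderiv ℝ (gradient f) b‖ ≤ L * ‖a - b‖) (a w : E) :
    f (a + w) ≤ f a + ⟪gradient f a, w⟫ + ⟪fderiv ℝ (gradient f) a w, w⟫ / 2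
      + L / 6 * ‖w‖ ^ 3 := by
  set H := fderiv ℝ (gradient f)
  have hcurv : ∀ t ∈ Ico (0 : ℝ) 1,
      ⟪H (a + t • w) w, w⟫ ≤ ⟪H a w, w⟫ + 2 * (L / 2 * ‖w‖ ^ 3) * t := by
    intro t ht
    have hgap : ⟪(H (a + t • w) - H a) w, w⟫ ≤ L * ‖w‖ ^ 3 * t :=
      calc _ ≤ ‖(H (a + t • w) - H a) w‖ * ‖w‖ := real_inner_le_norm _ _
        _ ≤ ‖H (a + t • w) - H a‖ * ‖w‖ * ‖w‖ := by gcongr; exact ContinuousLinearMap.le_opNorm _ _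
        _ ≤ L * ‖t • w‖ * ‖w‖ * ‖w‖ := by gcongr; simpa using hL (a + t • w) a
        _ = L * ‖w‖ ^ 3 * t := by rw [norm_smul, Real.norm_of_nonneg ht.1]; ring
    rw [sub_apply, inner_sub_left] at hgap
    linarith
  have hslope : ∀ t ∈ Icc (0 : ℝ) 1, ⟪gradient f (a + t • w), w⟫ ≤
      ⟪gradient f a, w⟫ + ⟪H a w, w⟫ * t + L / 2 * ‖w‖ ^ 3 * t ^ 2 + 0 * t ^ 3 :=
    le_of_hasDerivAt_le (hasDerivAt_inner_gradient_add_smul hf a w)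
      (fun t ↦ hasDerivAt_cubic _ _ _ _ t) (by simp) (by simpa using hcurv)
  have key := le_of_hasDerivAt_le (hasDerivAt_apply_add_smul (hf.differentiable two_ne_zero) a w)
    (fun t ↦ hasDerivAt_cubic (f a) ⟪gradient f a, w⟫ (⟪H a w, w⟫ / 2) (L / 6 * ‖w‖ ^ 3) t)
    (by simp) (fun t ht ↦ by linarith [hslope t (Ico_subset_Icc_self ht)]) 1 ⟨zero_le_one, le_rfl⟩
  simpa using key

theorem apply_sub_gradient_le {L : ℝ} (hL0 : 0 < L) (hf : Differentiable ℝ f)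
    (hL : ∀ a b, ‖gradient f a - gradient f b‖ ≤ L * ‖a - b‖) (a : E) :
    f (a - (1 / L) • gradient f a) ≤ f a - ‖gradient f a‖ ^ 2 / (2 * L) := by
  have key := apply_add_le_of_lipschitz_gradient hf hL a (-(1 / L) • gradient f a)
  rw [neg_smul, ← sub_eq_add_neg, inner_neg_right, real_inner_smul_right,
    real_inner_self_eq_norm_sq, norm_neg, norm_smul, Real.norm_of_nonneg (by positivity)] at key
  have : -(1 / L * ‖gradient f a‖ ^ 2) + L / 2 * (1 / L * ‖gradient f a‖) ^ 2
      = -(‖gradient f a‖ ^ 2 / (2 * L)) := by field_simp; ring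
  linarith

theorem apply_sub_curvature_step_le {L : ℝ} (hL0 : 0 < L) (hf : ContDiff ℝ 2 f)
    (hL : ∀ a b, ‖fderiv ℝ (gradient f) a - fderiv ℝ (gradient f) b‖ ≤ L * ‖a - b‖)
    {a v : E} (hv : ‖v‖ = 1) (hneg : ⟪fderiv ℝ (gradient f) a v, v⟫ ≤ 0) :
    f (a - (2 * |⟪fderiv ℝ (gradient f) a v, v⟫| / L * sgn ⟪gradient f a, v⟫) • v) ≤
      f a - 2 * |⟪fderiv ℝ (gradient f) a v, v⟫| ^ 3 / (3 * L ^ 2) := by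
  set q := ⟪fderiv ℝ (gradient f) a v, v⟫
  set c := 2 * |q| / L
  set σ := sgn ⟪gradient f a, v⟫
  have key := apply_add_le_of_lipschitz_hessian hf hL a (-(c * σ) • v)
  rw [neg_smul, ← sub_eq_add_neg, inner_neg_right, real_inner_smul_right, map_neg, map_smul,
    inner_neg_left, inner_neg_right, real_inner_smul_left, real_inner_smul_right, norm_neg,
    norm_smul, hv, mul_one, Real.norm_eq_abs, abs_mul, abs_sgn, mul_one,
    abs_of_nonneg (by positivity : 0 ≤ c)] at key
  have hσ : c * σ * ⟪gradient f a, v⟫ = c * |⟪gradient f a, v⟫| := by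
    rw [mul_assoc, sgn_mul_self]
  have hq : c * σ * (c * σ * q) / 2 + L / 6 * c ^ 3 = -(2 * |q| ^ 3 / (3 * L ^ 2)) := by
    rw [show c * σ * (c * σ * q) = c ^ 2 * q * (σ * σ) by ring, sgn_mul_sgn]
    simp only [c, abs_of_nonpos hneg]
    field_simp
    ring
  have : 0 ≤ c * |⟪gradient f a, v⟫| := by positivity
  linarith

theorem apply_ncgStep_le {L1 L2 : ℝ} (hL1 : 0 < L1) (hL2 : 0 < L2) (hf : ContDiff ℝ 2 f)
    (hglip : ∀ a b, ‖gradient f a - gradient f b‖ ≤ L1 * ‖a - b‖)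
    (hHlip : ∀ a b, ‖fderiv ℝ (gradient f) a - fderiv ℝ (gradient f) b‖ ≤ L2 * ‖a - b‖)
    {a v : E} (hv : ‖v‖ = 1) (hneg : ⟪fderiv ℝ (gradient f) a v, v⟫ ≤ 0) :
    f (ncgStep f L1 L2 a v) ≤ f a - max (2 * |⟪fderiv ℝ (gradient f) a v, v⟫| ^ 3 / (3 * L2 ^ 2))
      (‖gradient f a‖ ^ 2 / (2 * L1)) := by
  unfold ncgStep
  split_ifs with h
  · rw [max_eq_left h.le]
    exact apply_sub_curvature_step_le hL2 hf hHlip hv hneg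
  · rw [max_eq_right (not_lt.mp h)]
    exact apply_sub_gradient_le hL1 (hf.differentiable two_ne_zero) hglip a

end InnerProductSpace

theorem inv_max_le_max_of_le_or_lt {L1 L2 ε α q r : ℝ} (hL1 : 0 < L1) (hL2 : 0 < L2)
    (hε : 0 < ε) (h : q ≤ -ε ^ α / 2 ∨ ε < r) :
    (max (12 * L2 ^ 2 / ε ^ (3 * α)) (2 * L1 / ε ^ 2))⁻¹ ≤
      max (2 * |q| ^ 3 / (3 * L2 ^ 2)) (r ^ 2 / (2 * L1)) := by
  rcases h with hq | hr
  · have hq' : ε ^ α / 2 ≤ |q| := by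
      rw [abs_of_nonpos (by linarith [ε.rpow_pos_of_pos hε α])]
      linarith
    calc _ ≤ (12 * L2 ^ 2 / ε ^ (3 * α))⁻¹ := inv_anti₀ (by positivity) (le_max_left _ _)
      _ = 2 * (ε ^ α / 2) ^ 3 / (3 * L2 ^ 2) := by
        rw [mul_comm 3 α, Real.rpow_mul hε.le, Real.rpow_ofNat]; field_simp; ring
      _ ≤ 2 * |q| ^ 3 / (3 * L2 ^ 2) := by gcongr
      _ ≤ _ := le_max_left _ _
  · calc _ ≤ (2 * L1 / ε ^ 2)⁻¹ := inv_anti₀ (by positivity) (le_max_right _ _)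
      _ = ε ^ 2 / (2 * L1) := inv_div _ _
      _ ≤ r ^ 2 / (2 * L1) := by gcongr
      _ ≤ _ := le_max_right _ _

theorem exists_first_mul_le_of_descent {F : ℕ → ℝ} {P : ℕ → Prop} {δ Δ : ℝ} (hδ : 0 < δ)
    (hdec : ∀ n, ¬ P n → F (n + 1) + δ ≤ F n) (hbdd : ∀ n, F 0 - F n ≤ Δ) :
    ∃ n, P n ∧ (∀ m < n, ¬ P m) ∧ n * δ ≤ Δ := by
  have htel : ∀ n, (∀ m < n, ¬ P m) → F n + n * δ ≤ F 0 := by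
    intro n
    induction n with
    | zero => simp
    | succ n ih =>
      intro hn
      have := hdec n (hn n n.lt_succ_self)
      push_cast
      linarith [ih fun m hm ↦ hn m (hm.trans n.lt_succ_self)]
  have hex : ∃ n, P n := by
    by_contra! hnone
    obtain ⟨N, hN⟩ := exists_nat_gt (Δ / δ)
    rw [div_lt_iff₀ hδ] at hN
    linarith [htel N fun m _ ↦ hnone m, hbdd N]
  classical
  have hmin : ∀ m < Nat.find hex, ¬ P m := fun m ↦ Nat.find_min hex
  exact ⟨Nat.find hex, Nat.find_spec hex, hmin, by linarith [htel _ hmin, hbdd (Nat.find hex)]⟩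

theorem NCG_A2_guarantee_general {d : ℕ}
    (f : EuclideanSpace ℝ (Fin d) → ℝ) (L1 L2 α ε₁ ε₂ Δ : ℝ)
    (hL1 : 0 < L1) (hL2 : 0 < L2)
    (hα : 0 < α)
    (hε₁ : 0 < ε₁)
    (hε₂ : ε₂ = ε₁ ^ α)
    (hf : ContDiff ℝ 2 f)
    (hglip : ∀ a b : EuclideanSpace ℝ (Fin d),
      ‖gradient f a - gradient f b‖ ≤ L1 * ‖a - b‖)
    (hHlip : ∀ a b : EuclideanSpace ℝ (Fin d),
      ‖fderiv ℝ (gradient f) a - fderiv ℝ (gradient f) b‖ ≤ L2 * ‖a - b‖)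
    (x₀ : EuclideanSpace ℝ (Fin d))
    (hΔ : ∀ z : EuclideanSpace ℝ (Fin d), f x₀ - f z ≤ Δ)
    (x v : ℕ → EuclideanSpace ℝ (Fin d))
    (hx1 : x 1 = x₀)
    (hv : ∀ j : ℕ, 1 ≤ j → ‖v j‖ = 1)
    (hvneg : ∀ j : ℕ, 1 ≤ j → ⟪(fderiv ℝ (gradient f) (x j)) (v j), v j⟫ ≤ 0)
    (hmin : ∀ j : ℕ, 1 ≤ j → ∀ u : EuclideanSpace ℝ (Fin d), ‖u‖ = 1 →
      ⟪(fderiv ℝ (gradient f) (x j)) u, u⟫ ≥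
        ⟪(fderiv ℝ (gradient f) (x j)) (v j), v j⟫ -
          max ε₂ (‖gradient f (x j)‖ ^ α) / 2)
    (hupd : ∀ j : ℕ, 1 ≤ j →
      x (j + 1) =
        if 2 * |⟪(fderiv ℝ (gradient f) (x j)) (v j), v j⟫| ^ 3 / (3 * L2 ^ 2) >
            ‖gradient f (x j)‖ ^ 2 / (2 * L1) then
          x j - ((2 * |⟪(fderiv ℝ (gradient f) (x j)) (v j), v j⟫| / L2) *
            sgn ⟪gradient f (x j), v j⟫) • v j
        else
          x j - (1 / L1) • gradient f (x j)) :
    ∃ jstar : ℕ, 1 ≤ jstar ∧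
      (⟪(fderiv ℝ (gradient f) (x jstar)) (v jstar), v jstar⟫ > -ε₂ / 2 ∧
        ‖gradient f (x jstar)‖ ≤ ε₁) ∧
      (∀ i : ℕ, 1 ≤ i → i < jstar →
        ¬(⟪(fderiv ℝ (gradient f) (x i)) (v i), v i⟫ > -ε₂ / 2 ∧
          ‖gradient f (x i)‖ ≤ ε₁)) ∧
      (jstar : ℝ) ≤ 1 + max (12 * L2 ^ 2 / ε₁ ^ (3 * α)) (2 * L1 / ε₁ ^ 2) * Δ ∧
      ∀ u : EuclideanSpace ℝ (Fin d), ‖u‖ = 1 →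
        ⟪(fderiv ℝ (gradient f) (x jstar)) u, u⟫ ≥ -(ε₁ ^ α) := by
  subst hε₂
  set M := max (12 * L2 ^ 2 / ε₁ ^ (3 * α)) (2 * L1 / ε₁ ^ 2)
  have hM : 0 < M := lt_max_of_lt_right (by positivity)
  have hnext : ∀ j, 1 ≤ j → x (j + 1) = ncgStep f L1 L2 (x j) (v j) := hupd
  have hstep : ∀ n : ℕ, ¬(⟪fderiv ℝ (gradient f) (x (n + 1)) (v (n + 1)), v (n + 1)⟫ > -ε₁ ^ α / 2
      ∧ ‖gradient f (x (n + 1))‖ ≤ ε₁) → f (x (n + 1 + 1)) + M⁻¹ ≤ f (x (n + 1)) := by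
    intro n hn
    rw [not_and_or, not_lt, not_le] at hn
    have hdecr := apply_ncgStep_le hL1 hL2 hf hglip hHlip (hv (n + 1) le_add_self)
      (hvneg (n + 1) le_add_self)
    rw [← hnext (n + 1) le_add_self] at hdecr
    linarith [inv_max_le_max_of_le_or_lt hL1 hL2 hε₁ hn]
  obtain ⟨n, hstop, hfirst, hcount⟩ := exists_first_mul_le_of_descent
    (F := fun n ↦ f (x (n + 1))) (inv_pos.2 hM) hstep fun n ↦ by simpa [hx1] using hΔ (x (n + 1))
  refine ⟨n + 1, le_add_self, hstop, fun i hi1 hi2 ↦ ?_, ?_, fun u hu ↦ ?_⟩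
  · obtain ⟨m, rfl⟩ := Nat.exists_eq_add_of_le' hi1
    exact hfirst m (by omega)
  · rw [← div_eq_mul_inv, div_le_iff₀ hM] at hcount
    push_cast
    linarith
  · have hnoise : max (ε₁ ^ α) (‖gradient f (x (n + 1))‖ ^ α) = ε₁ ^ α :=
      max_eq_left (Real.rpow_le_rpow (norm_nonneg _) hstop.2 hα.le)
    linarith [hmin (n + 1) le_add_self u hu, hstop.1]

/-- Theorem on NCG-A2: convergence guarantee of the NCG-A2 algorithm,
where the noise level of each NCG step is `max(ε₂, ‖∇f(x_j)‖^α)/2` with `ε₂ = ε₁^α`. -/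
theorem NCG_A2_guarantee {d : ℕ}
    (f : EuclideanSpace ℝ (Fin d) → ℝ) (L1 L2 α ε₁ ε₂ Δ : ℝ)
    (hL1 : 0 < L1) (hL2 : 0 < L2)
    (hα : 0 < α) (hα1 : α ≤ 1)
    (hε₁ : 0 < ε₁) (hε₁1 : ε₁ < 1)
    (hε₂ : ε₂ = ε₁ ^ α)
    (hf : ContDiff ℝ 2 f)
    (hglip : ∀ a b : EuclideanSpace ℝ (Fin d),
      ‖gradient f a - gradient f b‖ ≤ L1 * ‖a - b‖)
    (hHlip : ∀ a b : EuclideanSpace ℝ (Fin d),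
      ‖fderiv ℝ (gradient f) a - fderiv ℝ (gradient f) b‖ ≤ L2 * ‖a - b‖)
    (x₀ : EuclideanSpace ℝ (Fin d))
    (hΔ : ∀ z : EuclideanSpace ℝ (Fin d), f x₀ - f z ≤ Δ)
    (x v : ℕ → EuclideanSpace ℝ (Fin d))
    (hx1 : x 1 = x₀)
    (hv : ∀ j : ℕ, 1 ≤ j → ‖v j‖ = 1)
    (hvneg : ∀ j : ℕ, 1 ≤ j → ⟪(fderiv ℝ (gradient f) (x j)) (v j), v j⟫ ≤ 0)
    (hmin : ∀ j : ℕ, 1 ≤ j → ∀ u : EuclideanSpace ℝ (Fin d), ‖u‖ = 1 →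
      ⟪(fderiv ℝ (gradient f) (x j)) u, u⟫ ≥
        ⟪(fderiv ℝ (gradient f) (x j)) (v j), v j⟫ -
          max ε₂ (‖gradient f (x j)‖ ^ α) / 2)
    (hupd : ∀ j : ℕ, 1 ≤ j →
      x (j + 1) =
        if 2 * |⟪(fderiv ℝ (gradient f) (x j)) (v j), v j⟫| ^ 3 / (3 * L2 ^ 2) >
            ‖gradient f (x j)‖ ^ 2 / (2 * L1) then
          x j - ((2 * |⟪(fderiv ℝ (gradient f) (x j)) (v j), v j⟫| / L2) *
            sgn ⟪gradient f (x j), v j⟫) • v j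
        else
          x j - (1 / L1) • gradient f (x j)) :
    ∃ jstar : ℕ, 1 ≤ jstar ∧
      (⟪(fderiv ℝ (gradient f) (x jstar)) (v jstar), v jstar⟫ > -ε₂ / 2 ∧
        ‖gradient f (x jstar)‖ ≤ ε₁) ∧
      (∀ i : ℕ, 1 ≤ i → i < jstar →
        ¬(⟪(fderiv ℝ (gradient f) (x i)) (v i), v i⟫ > -ε₂ / 2 ∧
          ‖gradient f (x i)‖ ≤ ε₁)) ∧
      (jstar : ℝ) ≤ 1 + max (12 * L2 ^ 2 / ε₁ ^ (3 * α)) (2 * L1 / ε₁ ^ 2) * Δ ∧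
      ∀ u : EuclideanSpace ℝ (Fin d), ‖u‖ = 1 →
        ⟪(fderiv ℝ (gradient f) (x jstar)) u, u⟫ ≥ -(ε₁ ^ α) :=
  NCG_A2_guarantee_general f L1 L2 α ε₁ ε₂ Δ hL1 hL2 hα hε₁ hε₂ hf hglip hHlip x₀ hΔ x v hx1 hv
    hvneg hmin hupd
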